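/- arXiv:2601.10380 — 2 statements merged into one kernel-verified Lean document; each statement's English description precedes it below -/
import Mathlib

section
/- Let E, F, G be real Banach spaces, U ⊆ E and V ⊆ F open sets, p ≥ 1, and f : U × V → G a map of class C^p. Let (a,b) ∈ U × V with f(a,b) = 0. Let r_x, r_y > 0 be such that the open balls B_{r_x}(a) ⊆ U and B_{r_y}(b) ⊆ V, and let J₀ : F → G be a continuous linear isomorphism with continuous inverse J₀⁻¹. Assume that for all x ∈ B_{r_x}(a) and y ∈ B_{r_y}(b), the partial derivative D₂f(x,y) (with respect to the second variable) satisfies ‖D₂f(x,y) − J₀‖ ≤ 1/(2‖J₀⁻¹‖), and let M₁ > 0 be an upper bound for ‖D₁f(x,y)‖ over all (x,y) ∈ B_{r_x}(a) × B_{r_y}(b). Set r = min{ r_y/(2‖J₀⁻¹‖ M₁), r_x }. Then: (i) for every x ∈ B_r(a) there exists exactly one y ∈ B_{r_y}(b) with f(x,y) = 0; (ii) the resulting map g : B_r(a) → B_{r_y}(b), g(x) = y, satisfies g(a) = b and f(x, g(x)) = 0 for all x ∈ B_r(a); (iii) g is of class C^p, and for every x ∈ B_r(a), D₂f(x, g(x))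 is invertible and Dg(x) = −(D₂f(x, g(x)))⁻¹ ∘ D₁f(x, g(x)). -/
open Metric Filter Topology NNReal

/-! For fixed `x`, the map `y ↦ f (x, y)` approximates `J₀` on `B_{r_y}(b)` with constant
`1 / (2‖J₀⁻¹‖)`, so it is injective there and, by the quantitative open mapping property of such
maps, it vanishes somewhere in `B_{r_y}(b)` as soon as `‖f (x, b)‖ ≤ M₁ ‖x - a‖` is smaller than
`r_y / (2‖J₀⁻¹‖)`. This defines `g`. Along its graph `D₂f` is within `1 / (2‖J₀⁻¹‖)` of `J₀`, hence
invertible (Neumann series), so the local implicit function theorem applies at every point; by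
uniqueness of the zero in `B_{r_y}(b)`, `g` coincides near each point with the local implicit
function, which is `C^p` with derivative `-(D₂f)⁻¹ ∘ D₁f`. -/

theorem exists_fun_of_forall_existsUnique {α β : Type*} {s : Set α} {P : α → β → Prop}
    (h : ∀ x ∈ s, ∃! y, P x y) {a : α} {b : β} (hab : P a b) :
    ∃ g : α → β, g a = b ∧ ∀ x ∈ s, P x (g x) ∧ ∀ y, P x y → y = g x := by
  classical
  refine ⟨fun x => if hx : x ∈ s then (h x hx).exists.choose else b, ?_, fun x hx => ?_⟩
  · by_cases ha : a ∈ s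
    · simpa only [dif_pos ha] using (h a ha).unique (h a ha).exists.choose_spec hab
    · simp only [dif_neg ha]
  · simp only [dif_pos hx]
    exact ⟨(h x hx).exists.choose_spec, fun y hy => (h x hx).unique hy (h x hx).exists.choose_spec⟩

section Perturbation

variable {𝕜 E F : Type*} [NontriviallyNormedField 𝕜]
  [NormedAddCommGroup E] [NormedSpace 𝕜 E] [NormedAddCommGroup F] [NormedSpace 𝕜 F]

theorem ContinuousLinearEquiv.isInvertible_of_norm_sub_lt [CompleteSpace E] (J : E ≃L[𝕜] F)
    {A : E →L[𝕜] F} (h : ‖(J.symm : F →L[𝕜] E)‖ * ‖A - J‖ < 1) : A.IsInvertible := by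
  set t : E →L[𝕜] E := (J.symm : F →L[𝕜] E) ∘L ((J : E →L[𝕜] F) - A)
  have ht : ‖t‖ < 1 := (ContinuousLinearMap.opNorm_comp_le _ _).trans_lt (by rwa [norm_sub_rev])
  have hA : A = (J : E →L[𝕜] F) ∘L (1 - t) := by ext; simp [t]
  rw [hA]
  exact ContinuousLinearMap.isInvertible_equiv.comp ⟨.ofUnit (Units.oneSub t ht), rfl⟩

theorem ContinuousLinearEquiv.isInvertible_of_norm_sub_le_one_div_two_mul [CompleteSpace E]
    (J : E ≃L[𝕜] F) {A : E →L[𝕜] F} (h : ‖A - J‖ ≤ 1 / (2 * ‖(J.symm : F →L[𝕜] E)‖)) :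
    A.IsInvertible :=
  J.isInvertible_of_norm_sub_lt <|
    calc _ ≤ ‖(J.symm : F →L[𝕜] E)‖ * (1 / (2 * ‖(J.symm : F →L[𝕜] E)‖)) := by gcongr
      _ < 1 := by
        rw [one_div, mul_inv, mul_left_comm]
        linarith [mul_inv_le_one (a := ‖(J.symm : F →L[𝕜] E)‖)]

theorem ApproximatesLinearOn.existsUnique_eq_zero [CompleteSpace E] {h : E → F} {J : E ≃L[𝕜] F}
    {b : E} {ρ : ℝ} {c : ℝ≥0} (hh : ApproximatesLinearOn h (J : E →L[𝕜] F) (ball b ρ) c)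
    (hc : (c : ℝ) < ‖(J.symm : F →L[𝕜] E)‖⁻¹)
    (hb : ‖h b‖ < (‖(J.symm : F →L[𝕜] E)‖⁻¹ - c) * ρ) :
    ∃! y, y ∈ ball b ρ ∧ h y = 0 := by
  set k := ‖(J.symm : F →L[𝕜] E)‖⁻¹ - c
  have hk : 0 < k := sub_pos.2 hc
  have hε : ‖h b‖ / k < ρ := (div_lt_iff₀' hk).2 hb
  have hsub : closedBall b (‖h b‖ / k) ⊆ ball b ρ := closedBall_subset_ball hε
  obtain ⟨y, hy, hy0⟩ := (hh.mono_set hsub).surjOn_closedBall_of_nonlinearRightInverse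
    J.toNonlinearRightInverse (by positivity) subset_rfl
    (show (0 : F) ∈ closedBall (h b) (k * (‖h b‖ / k)) by
      rw [mul_div_cancel₀ _ hk.ne', mem_closedBall, dist_zero_left])
  have hinj : Set.InjOn h (ball b ρ) := hh.injOn (.inr (by exact_mod_cast hc))
  exact ⟨y, ⟨hsub hy, hy0⟩, fun z hz => hinj hz.1 (hsub hy) (hz.2.trans hy0.symm)⟩

end Perturbation

section Zeros

variable {E F G : Type*} [NormedAddCommGroup E] [NormedSpace ℝ E]
  [NormedAddCommGroup F] [NormedSpace ℝ F] [NormedAddCommGroup G] [NormedSpace ℝ G]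

theorem existsUnique_zero_of_norm_fderiv_sub_le [CompleteSpace E] {h : E → F} {J : E ≃L[ℝ] F}
    {b : E} {ρ : ℝ} (hd : ∀ y ∈ ball b ρ, DifferentiableAt ℝ h y)
    (hJ : ∀ y ∈ ball b ρ, ‖fderiv ℝ h y - J‖ ≤ 1 / (2 * ‖(J.symm : F →L[ℝ] E)‖))
    (hJ0 : 0 < ‖(J.symm : F →L[ℝ] E)‖) (hb : 2 * ‖(J.symm : F →L[ℝ] E)‖ * ‖h b‖ < ρ) :
    ∃! y, y ∈ ball b ρ ∧ h y = 0 := by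
  set L := ‖(J.symm : F →L[ℝ] E)‖
  have happrox : ApproximatesLinearOn h (J : E →L[ℝ] F) (ball b ρ) ⟨1 / (2 * L), by positivity⟩ :=
    fun y hy z hz => (convex_ball b ρ).norm_image_sub_le_of_norm_fderiv_le' hd hJ hz hy
  have hgap : L⁻¹ - 1 / (2 * L) = 1 / (2 * L) := by field_simp; ring
  refine happrox.existsUnique_eq_zero ?_ ?_
  · show 1 / (2 * L) < L⁻¹
    rw [inv_eq_one_div]; exact one_div_lt_one_div_of_lt hJ0 (by linarith)
  · show ‖h b‖ < (L⁻¹ - 1 / (2 * L)) * ρ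
    rw [hgap, one_div_mul_eq_div, lt_div_iff₀ (by positivity)]; linarith

theorem existsUnique_zero_of_mem_ball [CompleteSpace F] {f : E × F → G} {J : F ≃L[ℝ] G}
    {a : E} {b : F} {rx ry M : ℝ} (hM : 0 < M) (hfab : f (a, b) = 0)
    (hd : ∀ x ∈ ball a rx, ∀ y ∈ ball b ry, DifferentiableAt ℝ f (x, y))
    (hD2 : ∀ x ∈ ball a rx, ∀ y ∈ ball b ry,
      ‖fderiv ℝ (fun y' => f (x, y')) y - (J : F →L[ℝ] G)‖ ≤ 1 / (2 * ‖(J.symm : G →L[ℝ] F)‖))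
    (hD1 : ∀ x ∈ ball a rx, ∀ y ∈ ball b ry, ‖fderiv ℝ (fun x' => f (x', y)) x‖ ≤ M)
    {x : E} (hx : x ∈ ball a (min (ry / (2 * ‖(J.symm : G →L[ℝ] F)‖ * M)) rx)) :
    ∃! y, y ∈ ball b ry ∧ f (x, y) = 0 := by
  set L := ‖(J.symm : G →L[ℝ] F)‖
  have hxrx : x ∈ ball a rx := ball_subset_ball (min_le_right _ _) hx
  have hxry : ‖x - a‖ < ry / (2 * L * M) :=
    (mem_ball_iff_norm.1 hx).trans_le (min_le_left _ _)
  obtain ⟨hry, hLM⟩ : 0 < ry ∧ 0 < 2 * L * M := by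
    rcases div_pos_iff.1 ((norm_nonneg _).trans_lt hxry) with h | h
    · exact h
    · exact absurd h.2 (not_lt.2 (by positivity))
  have hL : 0 < L := by nlinarith
  have hxb : ‖f (x, b)‖ ≤ M * ‖x - a‖ := by
    simpa only [hfab, sub_zero] using
      (convex_ball a rx).norm_image_sub_le_of_norm_fderiv_le (f := fun x' => f (x', b))
      (fun x' hx' => (hd x' hx' b (mem_ball_self hry)).comp x' (by fun_prop))
      (fun x' hx' => hD1 x' hx' b (mem_ball_self hry)) (mem_ball_self (pos_of_mem_ball hxrx)) hxrx
  refine existsUnique_zero_of_norm_fderiv_sub_le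
    (fun y hy => (hd x hxrx y hy).comp y (by fun_prop)) (hD2 x hxrx) hL ?_
  rw [lt_div_iff₀ (by positivity)] at hxry
  nlinarith

end Zeros

section PartialDerivatives

variable {𝕜 E F G : Type*} [NontriviallyNormedField 𝕜] [NormedAddCommGroup E] [NormedSpace 𝕜 E]
  [NormedAddCommGroup F] [NormedSpace 𝕜 F] [NormedAddCommGroup G] [NormedSpace 𝕜 G]
  {f : E × F → G}

theorem DifferentiableAt.fderiv_comp_prodMk_left {x : E} {y : F}
    (hf : DifferentiableAt 𝕜 f (x, y)) :
    fderiv 𝕜 (fun x' => f (x', y)) x = fderiv 𝕜 f (x, y) ∘L .inl 𝕜 E F :=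
  (hf.hasFDerivAt.comp x (hasFDerivAt_prodMk_left x y)).fderiv

theorem DifferentiableAt.fderiv_comp_prodMk_right {x : E} {y : F}
    (hf : DifferentiableAt 𝕜 f (x, y)) :
    fderiv 𝕜 (fun y' => f (x, y')) y = fderiv 𝕜 f (x, y) ∘L .inr 𝕜 E F :=
  (hf.hasFDerivAt.comp y (hasFDerivAt_prodMk_right x y)).fderiv

end PartialDerivatives

section Implicit

variable {𝕜 E F G : Type*} [RCLike 𝕜]
  [NormedAddCommGroup E] [NormedSpace 𝕜 E] [CompleteSpace E]
  [NormedAddCommGroup F] [NormedSpace 𝕜 F] [CompleteSpace F]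
  [NormedAddCommGroup G] [NormedSpace 𝕜 G] [CompleteSpace G]
  {f : E × F → G} {g : E → F} {x₀ : E} {W : Set F} {n : WithTop ℕ∞}

theorem ContDiffAt.eventuallyEq_implicitFunction (hf : ContDiffAt 𝕜 n f (x₀, g x₀)) (hn : n ≠ 0)
    (hinv : (fderiv 𝕜 f (x₀, g x₀) ∘L .inr 𝕜 E F).IsInvertible) (hW : W ∈ 𝓝 (g x₀))
    (huniq : ∀ᶠ x in 𝓝 x₀, ∀ y ∈ W, f (x, y) = f (x₀, g x₀) → y = g x) :
    hf.implicitFunction hn hinv =ᶠ[𝓝 x₀] g := by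
  have hψ : Tendsto (hf.implicitFunction hn hinv) (𝓝 x₀) (𝓝 (g x₀)) := by
    simpa only [hf.implicitFunction_apply_self] using
      (hf.contDiffAt_implicitFunction hn hinv).continuousAt.tendsto
  filter_upwards [hψ hW, hf.eventually_apply_implicitFunction hn hinv, huniq]
    with x hxW hfx hx using hx _ hxW hfx

variable (T : F ≃L[𝕜] G)

theorem ContDiffAt.contDiffAt_of_eventually_unique (hf : ContDiffAt 𝕜 n f (x₀, g x₀))
    (hn : n ≠ 0) (hT : (T : F →L[𝕜] G) = fderiv 𝕜 (fun y => f (x₀, y)) (g x₀))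
    (hW : W ∈ 𝓝 (g x₀)) (huniq : ∀ᶠ x in 𝓝 x₀, ∀ y ∈ W, f (x, y) = f (x₀, g x₀) → y = g x) :
    ContDiffAt 𝕜 n g x₀ := by
  rw [(hf.differentiableAt hn).fderiv_comp_prodMk_right] at hT
  exact (hf.contDiffAt_implicitFunction hn ⟨T, hT⟩).congr_of_eventuallyEq
    (hf.eventuallyEq_implicitFunction hn ⟨T, hT⟩ hW huniq).symm

theorem ContDiffAt.hasFDerivAt_of_eventually_unique (hf : ContDiffAt 𝕜 n f (x₀, g x₀))
    (hn : n ≠ 0) (hT : (T : F →L[𝕜] G) = fderiv 𝕜 (fun y => f (x₀, y)) (g x₀))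
    (hW : W ∈ 𝓝 (g x₀)) (huniq : ∀ᶠ x in 𝓝 x₀, ∀ y ∈ W, f (x, y) = f (x₀, g x₀) → y = g x) :
    HasFDerivAt g (-((T.symm : G →L[𝕜] F) ∘L fderiv 𝕜 (fun x => f (x, g x₀)) x₀)) x₀ := by
  have hdf := hf.differentiableAt hn
  rw [hdf.fderiv_comp_prodMk_right] at hT
  have := (hf.hasStrictFDerivAt_implicitFunction hn ⟨T, hT⟩).hasFDerivAt.congr_of_eventuallyEq
    (hf.eventuallyEq_implicitFunction hn ⟨T, hT⟩ hW huniq).symm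
  rwa [← hT, ContinuousLinearMap.inverse_equiv, ← hdf.fderiv_comp_prodMk_left] at this

end Implicit

theorem stmt_2_general {E F G : Type*}
    [NormedAddCommGroup E] [NormedSpace ℝ E] [CompleteSpace E]
    [NormedAddCommGroup F] [NormedSpace ℝ F] [CompleteSpace F]
    [NormedAddCommGroup G] [NormedSpace ℝ G] [CompleteSpace G]
    (U : Set E) (V : Set F) (hU : IsOpen U) (hV : IsOpen V)
    (p : ℕ) (hp : 1 ≤ p) (f : E × F → G) (hf : ContDiffOn ℝ p f (U ×ˢ V))
    (a : E) (b : F) (hfab : f (a, b) = 0)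
    (rx ry : ℝ) (hry : 0 < ry)
    (hballx : ball a rx ⊆ U) (hbally : ball b ry ⊆ V)
    (J₀ : F ≃L[ℝ] G)
    (hD2 : ∀ x ∈ ball a rx, ∀ y ∈ ball b ry,
      ‖fderiv ℝ (fun y' => f (x, y')) y - (J₀ : F →L[ℝ] G)‖ ≤
        1 / (2 * ‖(J₀.symm : G →L[ℝ] F)‖))
    (M₁ : ℝ) (hM₁ : 0 < M₁)
    (hD1 : ∀ x ∈ ball a rx, ∀ y ∈ ball b ry,
      ‖fderiv ℝ (fun x' => f (x', y)) x‖ ≤ M₁) :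
    ∃ g : E → F,
      g a = b ∧
      (∀ x ∈ ball a (min (ry / (2 * ‖(J₀.symm : G →L[ℝ] F)‖ * M₁)) rx),
        g x ∈ ball b ry ∧
        f (x, g x) = 0 ∧
        (∀ y ∈ ball b ry, f (x, y) = 0 → y = g x) ∧
        ∃ T : F ≃L[ℝ] G,
          (T : F →L[ℝ] G) = fderiv ℝ (fun y' => f (x, y')) (g x) ∧
          fderiv ℝ g x =
            -((T.symm : G →L[ℝ] F).comp (fderiv ℝ (fun x' => f (x', g x)) x))) ∧
      ContDiffOn ℝ p g
        (ball a (min (ry / (2 * ‖(J₀.symm : G →L[ℝ] F)‖ * M₁)) rx)) := by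
  set r := min (ry / (2 * ‖(J₀.symm : G →L[ℝ] F)‖ * M₁)) rx
  have hp0 : (p : WithTop ℕ∞) ≠ 0 := by exact_mod_cast (by omega : p ≠ 0)
  have hcd : ∀ x ∈ ball a rx, ∀ y ∈ ball b ry, ContDiffAt ℝ p f (x, y) := fun x hx y hy =>
    hf.contDiffAt ((hU.prod hV).mem_nhds ⟨hballx hx, hbally hy⟩)
  obtain ⟨g, hga, hg⟩ := exists_fun_of_forall_existsUnique
    (fun x hx => existsUnique_zero_of_mem_ball hM₁ hfab
      (fun x hx y hy => (hcd x hx y hy).differentiableAt hp0) hD2 hD1 hx)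
    (show b ∈ ball b ry ∧ f (a, b) = 0 from ⟨mem_ball_self hry, hfab⟩)
  have hreg : ∀ x ∈ ball a r, ContDiffAt ℝ p g x ∧ ∃ T : F ≃L[ℝ] G,
      (T : F →L[ℝ] G) = fderiv ℝ (fun y' => f (x, y')) (g x) ∧
      fderiv ℝ g x = -((T.symm : G →L[ℝ] F).comp (fderiv ℝ (fun x' => f (x', g x)) x)) := by
    intro x hx
    obtain ⟨⟨hgx, hfgx⟩, -⟩ := hg x hx
    have hxrx : x ∈ ball a rx := ball_subset_ball (min_le_right _ _) hx
    obtain ⟨T, hT⟩ := J₀.isInvertible_of_norm_sub_le_one_div_two_mul (hD2 x hxrx _ hgx)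
    have huniq : ∀ᶠ x' in 𝓝 x, ∀ y ∈ ball b ry, f (x', y) = f (x, g x) → y = g x' := by
      filter_upwards [isOpen_ball.mem_nhds hx] with x' hx' y hy hfy
        using (hg x' hx').2 y ⟨hy, hfy.trans hfgx⟩
    have hW := isOpen_ball.mem_nhds hgx
    exact ⟨(hcd x hxrx _ hgx).contDiffAt_of_eventually_unique T hp0 hT hW huniq, T, hT,
      ((hcd x hxrx _ hgx).hasFDerivAt_of_eventually_unique T hp0 hT hW huniq).fderiv⟩
  exact ⟨g, hga, fun x hx => ⟨(hg x hx).1.1, (hg x hx).1.2,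
    fun y hy hfy => (hg x hx).2 y ⟨hy, hfy⟩, (hreg x hx).2⟩,
    fun x hx => (hreg x hx).1.contDiffWithinAt⟩

/-- Modified implicit map theorem: if `f : U × V → G` is `C^p`,
`f(a,b) = 0`, the second partial derivative stays within `1/(2‖J₀⁻¹‖)` of a continuous linear
isomorphism `J₀` on `B_{r_x}(a) × B_{r_y}(b)`, and `M₁` bounds the first partial derivative
there, then on `B_r(a)` with `r = min(r_y/(2‖J₀⁻¹‖M₁), r_x)` there is a unique implicit map
`g` with `g(a) = b`, `f(x, g(x)) = 0`; it is `C^p` and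
`Dg(x) = −(D₂f(x,g(x)))⁻¹ ∘ D₁f(x,g(x))`. -/
theorem stmt_2 {E F G : Type*}
    [NormedAddCommGroup E] [NormedSpace ℝ E] [CompleteSpace E]
    [NormedAddCommGroup F] [NormedSpace ℝ F] [CompleteSpace F]
    [NormedAddCommGroup G] [NormedSpace ℝ G] [CompleteSpace G]
    (U : Set E) (V : Set F) (hU : IsOpen U) (hV : IsOpen V)
    (p : ℕ) (hp : 1 ≤ p) (f : E × F → G) (hf : ContDiffOn ℝ p f (U ×ˢ V))
    (a : E) (b : F) (haU : a ∈ U) (hbV : b ∈ V) (hfab : f (a, b) = 0)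
    (rx ry : ℝ) (hrx : 0 < rx) (hry : 0 < ry)
    (hballx : ball a rx ⊆ U) (hbally : ball b ry ⊆ V)
    (J₀ : F ≃L[ℝ] G)
    (hD2 : ∀ x ∈ ball a rx, ∀ y ∈ ball b ry,
      ‖fderiv ℝ (fun y' => f (x, y')) y - (J₀ : F →L[ℝ] G)‖ ≤
        1 / (2 * ‖(J₀.symm : G →L[ℝ] F)‖))
    (M₁ : ℝ) (hM₁ : 0 < M₁)
    (hD1 : ∀ x ∈ ball a rx, ∀ y ∈ ball b ry,
      ‖fderiv ℝ (fun x' => f (x', y)) x‖ ≤ M₁) :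
    ∃ g : E → F,
      g a = b ∧
      (∀ x ∈ ball a (min (ry / (2 * ‖(J₀.symm : G →L[ℝ] F)‖ * M₁)) rx),
        g x ∈ ball b ry ∧
        f (x, g x) = 0 ∧
        (∀ y ∈ ball b ry, f (x, y) = 0 → y = g x) ∧
        ∃ T : F ≃L[ℝ] G,
          (T : F →L[ℝ] G) = fderiv ℝ (fun y' => f (x, y')) (g x) ∧
          fderiv ℝ g x =
            -((T.symm : G →L[ℝ] F).comp (fderiv ℝ (fun x' => f (x', g x)) x))) ∧
      ContDiffOn ℝ p g
        (ball a (min (ry / (2 * ‖(J₀.symm : G →L[ℝ] F)‖ * M₁)) rx)) :=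
  stmt_2_general U V hU hV p hp f hf a b hfab rx ry hry hballx hbally J₀ hD2 M₁ hM₁ hD1
end

section
/- There exists an absolute constant C > 0 with the following property. Let A be a Hermitian operator on a finite-dimensional complex inner product space, let Ψ₀, Ψ₁ be orthonormal vectors with AΨ₀ = E₀Ψ₀ and AΨ₁ = E₁Ψ₁ for real numbers E₀, E₁, let δ ≥ 0, and let Φ₀, Φ₁ be unit vectors with ‖Φ₀ − Ψ₀‖ ≤ δ and ‖Φ₁ − Ψ₁‖ ≤ δ. Let O be a linear operator with operator norm ‖O‖ ≤ 1 satisfying OΦ₀ = Φ₁ and OΦ₁ = Φ₀, and set Φ₊ = (Φ₀ + Φ₁)/√2. Then for every real t, | ⟨Φ₊, e^{iAt} O e^{−iAt} Φ₊⟩ − cos((E₁ − E₀)t) | ≤ Cδ. -/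
/-!
Conjugation by the unitary `W = e^{-iAt}` turns the quantity into the mean of `O` in the state
`W (Φ₀ + Φ₁)`, which is `2δ`-close to `W (Ψ₀ + Ψ₁) = e^{-iE₀t} Ψ₀ + e^{-iE₁t} Ψ₁`. Since `O` is a
contraction swapping `Φ₀` and `Φ₁`, on the latter state it acts up to `4δ` as the exact swap of
`Ψ₀` and `Ψ₁`, whose mean there is `2 cos ((E₁ - E₀) t)` by orthonormality. This gives the
error `2δ · 4 + 2 · 4δ = 16δ` for `Φ₀ + Φ₁`, which the factor `1/√2` in `Φ₊` halves.
-/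

open NormedSpace Complex ComplexConjugate
open scoped InnerProductSpace

section Contraction

variable {𝕜 E F : Type*} [NontriviallyNormedField 𝕜] [SeminormedAddCommGroup E]
  [SeminormedAddCommGroup F] [NormedSpace 𝕜 E] [NormedSpace 𝕜 F]

lemma norm_map_sub_le_of_map_eq {T : E →L[𝕜] F} (hT : ‖T‖ ≤ 1) {x x' : E} {y y' : F}
    (h : T x' = y') : ‖T x - y‖ ≤ ‖x - x'‖ + ‖y - y'‖ := by
  have hsplit : T x - y = T (x - x') + (y' - y) := by rw [map_sub, h]; abel
  rw [hsplit, norm_sub_rev y]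
  exact (norm_add_le _ _).trans (add_le_add_left ((T.le_of_opNorm_le hT _).trans_eq (one_mul _)) _)

lemma norm_map_smul_add_smul_sub_swap_le {T : E →L[𝕜] E} (hT : ‖T‖ ≤ 1) {Φ₀ Φ₁ : E}
    (hTΦ₀ : T Φ₀ = Φ₁) (hTΦ₁ : T Φ₁ = Φ₀) (Ψ₀ Ψ₁ : E) {a₀ a₁ : 𝕜} (ha₀ : ‖a₀‖ ≤ 1)
    (ha₁ : ‖a₁‖ ≤ 1) :
    ‖T (a₀ • Ψ₀ + a₁ • Ψ₁) - (a₁ • Ψ₀ + a₀ • Ψ₁)‖ ≤ 2 * (‖Ψ₀ - Φ₀‖ + ‖Ψ₁ - Φ₁‖) := by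
  have hsplit : T (a₀ • Ψ₀ + a₁ • Ψ₁) - (a₁ • Ψ₀ + a₀ • Ψ₁)
      = a₀ • (T Ψ₀ - Ψ₁) + a₁ • (T Ψ₁ - Ψ₀) := by
    simp only [map_add, map_smul, smul_sub]; abel
  have h₀ := norm_map_sub_le_of_map_eq hT hTΦ₀ (x := Ψ₀) (y := Ψ₁)
  have h₁ := norm_map_sub_le_of_map_eq hT hTΦ₁ (x := Ψ₁) (y := Ψ₀)
  calc _ ≤ ‖a₀‖ * ‖T Ψ₀ - Ψ₁‖ + ‖a₁‖ * ‖T Ψ₁ - Ψ₀‖ := by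
        rw [hsplit, ← norm_smul, ← norm_smul]; exact norm_add_le _ _
    _ ≤ 1 * (‖Ψ₀ - Φ₀‖ + ‖Ψ₁ - Φ₁‖) + 1 * (‖Ψ₁ - Φ₁‖ + ‖Ψ₀ - Φ₀‖) := by gcongr
    _ = 2 * (‖Ψ₀ - Φ₀‖ + ‖Ψ₁ - Φ₁‖) := by ring

end Contraction

section InnerProductSpace

variable {𝕜 E : Type*} [RCLike 𝕜] [NormedAddCommGroup E] [InnerProductSpace 𝕜 E]

lemma norm_inner_map_self_sub_inner_map_self_le (T : E →L[𝕜] E) (x y : E) :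
    ‖⟪x, T x⟫_𝕜 - ⟪y, T y⟫_𝕜‖ ≤ ‖T‖ * ‖x - y‖ * (‖x‖ + ‖y‖) := by
  have hsplit : ⟪x, T x⟫_𝕜 - ⟪y, T y⟫_𝕜 = ⟪x - y, T x⟫_𝕜 + ⟪y, T (x - y)⟫_𝕜 := by
    rw [inner_sub_left, map_sub, inner_sub_right]; ring
  calc ‖⟪x, T x⟫_𝕜 - ⟪y, T y⟫_𝕜‖ ≤ ‖x - y‖ * ‖T x‖ + ‖y‖ * ‖T (x - y)‖ := by
        rw [hsplit]
        exact (norm_add_le _ _).trans (add_le_add (norm_inner_le_norm _ _) (norm_inner_le_norm _ _))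
    _ ≤ ‖x - y‖ * (‖T‖ * ‖x‖) + ‖y‖ * (‖T‖ * ‖x - y‖) := by gcongr <;> exact T.le_opNorm _
    _ = ‖T‖ * ‖x - y‖ * (‖x‖ + ‖y‖) := by ring

lemma inner_smul_add_smul_swap {e₀ e₁ : E} (h₀ : ‖e₀‖ = 1) (h₁ : ‖e₁‖ = 1) (h : ⟪e₀, e₁⟫_𝕜 = 0)
    (a b : 𝕜) : ⟪a • e₀ + b • e₁, b • e₀ + a • e₁⟫_𝕜 = conj a * b + conj b * a := by
  have h' : ⟪e₁, e₀⟫_𝕜 = 0 := inner_eq_zero_symm.mp h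
  simp only [inner_add_left, inner_add_right, inner_smul_left, inner_smul_right, h, h',
    inner_self_eq_norm_sq_to_K, h₀, h₁, RCLike.ofReal_one, one_pow]
  ring

lemma norm_inner_map_swap_sub_le {O W : E →L[𝕜] E} (hO : ‖O‖ ≤ 1) (hW : ‖W‖ ≤ 1)
    {Ψ₀ Ψ₁ Φ₀ Φ₁ : E} (hΨ₀ : ‖Ψ₀‖ = 1) (hΨ₁ : ‖Ψ₁‖ = 1) (horth : ⟪Ψ₀, Ψ₁⟫_𝕜 = 0)
    {a₀ a₁ : 𝕜} (hWΨ₀ : W Ψ₀ = a₀ • Ψ₀) (hWΨ₁ : W Ψ₁ = a₁ • Ψ₁)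
    (hΦ₀ : ‖Φ₀‖ = 1) (hΦ₁ : ‖Φ₁‖ = 1) {δ : ℝ} (hd₀ : ‖Φ₀ - Ψ₀‖ ≤ δ) (hd₁ : ‖Φ₁ - Ψ₁‖ ≤ δ)
    (hOΦ₀ : O Φ₀ = Φ₁) (hOΦ₁ : O Φ₁ = Φ₀) :
    ‖⟪W (Φ₀ + Φ₁), O (W (Φ₀ + Φ₁))⟫_𝕜 - (conj a₀ * a₁ + conj a₁ * a₀)‖ ≤ 16 * δ := by
  have hW_le (v : E) : ‖W v‖ ≤ ‖v‖ := (W.le_of_opNorm_le hW v).trans_eq (one_mul _)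
  have ha₀ : ‖a₀‖ ≤ 1 := by simpa [hWΨ₀, norm_smul, hΨ₀] using hW_le Ψ₀
  have ha₁ : ‖a₁‖ ≤ 1 := by simpa [hWΨ₁, norm_smul, hΨ₁] using hW_le Ψ₁
  have hδ : 0 ≤ δ := (norm_nonneg _).trans hd₀
  set x := W (Φ₀ + Φ₁)
  set y := a₀ • Ψ₀ + a₁ • Ψ₁
  set y' := a₁ • Ψ₀ + a₀ • Ψ₁
  have hWΨ : W (Ψ₀ + Ψ₁) = y := by rw [map_add, hWΨ₀, hWΨ₁]
  have hx : ‖x‖ ≤ 2 := (hW_le _).trans (by linarith [norm_add_le Φ₀ Φ₁])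
  have hy : ‖y‖ ≤ 2 := hWΨ ▸ (hW_le _).trans (by linarith [norm_add_le Ψ₀ Ψ₁])
  have hxy : ‖x - y‖ ≤ 2 * δ := by
    rw [← hWΨ, ← map_sub, add_sub_add_comm]
    exact (hW_le _).trans (by linarith [norm_add_le (Φ₀ - Ψ₀) (Φ₁ - Ψ₁)])
  have hOy : ‖O y - y'‖ ≤ 4 * δ := by
    have := norm_map_smul_add_smul_sub_swap_le hO hOΦ₀ hOΦ₁ Ψ₀ Ψ₁ ha₀ ha₁
    rw [norm_sub_rev Ψ₀, norm_sub_rev Ψ₁] at this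
    linarith
  have hsplit : ⟪x, O x⟫_𝕜 - (conj a₀ * a₁ + conj a₁ * a₀)
      = (⟪x, O x⟫_𝕜 - ⟪y, O y⟫_𝕜) + ⟪y, O y - y'⟫_𝕜 := by
    rw [inner_sub_right, inner_smul_add_smul_swap hΨ₀ hΨ₁ horth]; ring
  calc ‖⟪x, O x⟫_𝕜 - (conj a₀ * a₁ + conj a₁ * a₀)‖
      ≤ ‖O‖ * ‖x - y‖ * (‖x‖ + ‖y‖) + ‖y‖ * ‖O y - y'‖ := by
        rw [hsplit]
        exact (norm_add_le _ _).trans (add_le_add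
          (norm_inner_map_self_sub_inner_map_self_le O x y) (norm_inner_le_norm _ _))
    _ ≤ 1 * (2 * δ) * (2 + 2) + 2 * (4 * δ) := by gcongr
    _ = 16 * δ := by ring

end InnerProductSpace

section Exponential

variable {E : Type*} [NormedAddCommGroup E] [NormedSpace ℂ E] [CompleteSpace E]

lemma exp_smul_apply_of_apply_eq_smul {A : E →L[ℂ] E} {μ : ℂ} {v : E} (hv : A v = μ • v)
    (c : ℂ) : exp (c • A) v = Complex.exp (c * μ) • v := by
  have hpow (n : ℕ) : ((c • A) ^ n) v = (c * μ) ^ n • v := by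
    induction n with
    | zero => simp
    | succ n ih =>
      rw [pow_succ', mul_apply_eq_comp, ih, map_smul, smul_apply, hv, smul_smul, smul_smul,
        pow_succ]
      congr 1
      ring
  refine ((exp_series_hasSum_exp' (𝕂 := ℂ) (c • A)).mapL (.apply ℂ E v)).unique ?_
  rw [Complex.exp_eq_exp_ℂ]
  simpa [hpow, smul_smul] using (exp_series_hasSum_exp' (𝕂 := ℂ) (c * μ)).smul_const v

end Exponential

lemma conj_exp_mul_exp_add_conj_exp_mul_exp (t E₀ E₁ : ℝ) :
    conj (Complex.exp (-t * I * E₀)) * Complex.exp (-t * I * E₁)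
      + conj (Complex.exp (-t * I * E₁)) * Complex.exp (-t * I * E₀)
      = 2 * Real.cos ((E₁ - E₀) * t) := by
  rw [← Complex.exp_conj, ← Complex.exp_conj, ← Complex.exp_add, ← Complex.exp_add,
    Complex.ofReal_cos, Complex.two_cos]
  simp only [map_mul, map_neg, Complex.conj_ofReal, Complex.conj_I]
  push_cast
  ring_nf

section Unitary

variable {𝔸 : Type*} [NormedRing 𝔸] [NormedAlgebra ℂ 𝔸] [StarRing 𝔸] [ContinuousStar 𝔸]
  [StarModule ℂ 𝔸]

lemma IsSelfAdjoint.star_exp_I_smul {a : 𝔸} (ha : IsSelfAdjoint a) (t : ℝ) :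
    star (NormedSpace.exp ((t * I) • a)) = NormedSpace.exp ((-t * I) • a) := by
  rw [star_exp, star_smul, ha.star_eq]
  simp

lemma IsSelfAdjoint.exp_I_smul_mem_unitary [CompleteSpace 𝔸] {a : 𝔸} (ha : IsSelfAdjoint a)
    (t : ℝ) : NormedSpace.exp ((t * I) • a) ∈ unitary 𝔸 := by
  let : NormedAlgebra ℚ 𝔸 := NormedAlgebra.restrictScalars ℚ ℂ 𝔸
  refine exp_mem_unitary_of_mem_skewAdjoint (ha.smul_mem_skewAdjoint ?_)
  simp [skewAdjoint.mem_iff]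

end Unitary

section Hilbert

variable {E : Type*} [NormedAddCommGroup E] [InnerProductSpace ℂ E] [CompleteSpace E]

lemma norm_le_one_of_mem_unitary {U : E →L[ℂ] E} (hU : U ∈ unitary (E →L[ℂ] E)) : ‖U‖ ≤ 1 :=
  U.opNorm_le_bound zero_le_one fun x ↦ (U.norm_map_of_mem_unitary hU x).trans_le (one_mul _).ge

lemma IsSelfAdjoint.inner_exp_conj_apply {A : E →L[ℂ] E} (hA : IsSelfAdjoint A) (t : ℝ)
    (O : E →L[ℂ] E) (x y : E) :
    ⟪x, (NormedSpace.exp ((t * I) • A) ∘L O ∘L NormedSpace.exp ((-t * I) • A)) y⟫_ℂ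
      = ⟪NormedSpace.exp ((-t * I) • A) x, O (NormedSpace.exp ((-t * I) • A) y)⟫_ℂ := by
  rw [← hA.star_exp_I_smul, ContinuousLinearMap.star_eq_adjoint,
    ContinuousLinearMap.adjoint_inner_left]
  rfl

end Hilbert

/-- There is an absolute constant `C > 0` such that: for any Hermitian operator
`A` on a finite-dimensional complex inner product space with orthonormal eigenvectors `Ψ₀, Ψ₁`
(eigenvalues `E₀, E₁`), any unit vectors `Φ₀, Φ₁` that are `δ`-close to `Ψ₀, Ψ₁`, and any
operator `O` of norm at most 1 swapping `Φ₀` and `Φ₁`, setting `Φ₊ = (Φ₀+Φ₁)/√2`, for every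
real `t` we have `|⟨Φ₊, e^{iAt} O e^{−iAt} Φ₊⟩ − cos((E₁−E₀)t)| ≤ Cδ`. -/
theorem stmt_11 : ∃ C : ℝ, 0 < C ∧
    ∀ (V : Type) [NormedAddCommGroup V] [InnerProductSpace ℂ V] [FiniteDimensional ℂ V],
      ∀ (A : V →L[ℂ] V), IsSelfAdjoint A →
      ∀ (Ψ₀ Ψ₁ : V) (E₀ E₁ : ℝ),
        ‖Ψ₀‖ = 1 → ‖Ψ₁‖ = 1 → (inner ℂ Ψ₀ Ψ₁ : ℂ) = 0 →
        A Ψ₀ = (E₀ : ℂ) • Ψ₀ → A Ψ₁ = (E₁ : ℂ) • Ψ₁ →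
      ∀ (δ : ℝ), 0 ≤ δ →
      ∀ (Φ₀ Φ₁ : V), ‖Φ₀‖ = 1 → ‖Φ₁‖ = 1 → ‖Φ₀ - Ψ₀‖ ≤ δ → ‖Φ₁ - Ψ₁‖ ≤ δ →
      ∀ (O : V →L[ℂ] V), ‖O‖ ≤ 1 → O Φ₀ = Φ₁ → O Φ₁ = Φ₀ →
      ∀ t : ℝ,
        ‖((inner ℂ (((Real.sqrt 2 : ℝ) : ℂ)⁻¹ • (Φ₀ + Φ₁))
              ((NormedSpace.exp (((t : ℂ) * Complex.I) • A) ∘L O ∘L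
                NormedSpace.exp ((-(t : ℂ) * Complex.I) • A))
                (((Real.sqrt 2 : ℝ) : ℂ)⁻¹ • (Φ₀ + Φ₁))) : ℂ)
            - ((Real.cos ((E₁ - E₀) * t) : ℝ) : ℂ))‖ ≤ C * δ := by
  refine ⟨8, by norm_num, ?_⟩
  intro V _ _ _ A hA Ψ₀ Ψ₁ E₀ E₁ hΨ₀ hΨ₁ horth hAΨ₀ hAΨ₁ δ _ Φ₀ Φ₁ hΦ₀ hΦ₁ hd₀ hd₁ O hO hO₀ hO₁ t
  have hW := norm_le_one_of_mem_unitary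
    (IsSelfAdjoint.exp_I_smul_mem_unitary (𝔸 := V →L[ℂ] V) hA (-t))
  rw [Complex.ofReal_neg] at hW
  have key := norm_inner_map_swap_sub_le hO hW hΨ₀ hΨ₁ horth
    (exp_smul_apply_of_apply_eq_smul hAΨ₀ _) (exp_smul_apply_of_apply_eq_smul hAΨ₁ _)
    hΦ₀ hΦ₁ hd₀ hd₁ hO₀ hO₁
  rw [conj_exp_mul_exp_add_conj_exp_mul_exp] at key
  have hs : conj (((√2 : ℝ) : ℂ)⁻¹) * ((√2 : ℝ) : ℂ)⁻¹ = 1 / 2 := by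
    rw [← Complex.ofReal_inv, Complex.conj_ofReal, ← Complex.ofReal_mul, ← mul_inv,
      Real.mul_self_sqrt zero_le_two]
    norm_num
  rw [hA.inner_exp_conj_apply, map_smul, map_smul, inner_smul_left, inner_smul_right,
    ← mul_assoc, hs]
  have h_half : ‖(1 / 2 : ℂ)‖ = 1 / 2 := by norm_num
  rw [show ∀ x c : ℂ, 1 / 2 * x - c = 1 / 2 * (x - 2 * c) by intros; ring, norm_mul, h_half]
  linarith
end
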